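/- Let (M,φ,g) be a 2k-dimensional anti-paraKähler manifold and (TM,g_BS) its tangent bundle with the Berger type deformed Sasaki metric. A vector field ξ on M is parallel (∇ξ = 0) if and only if the map ξ : (M,g) → (TM,g_BS) is a minimal isometric immersion. -/

import Mathlib

/-!
A local-coordinate formalization (in a global chart `ℝⁿ`, `n = 2k`) of the
geometry of the tangent bundle of an anti-paraKähler manifold `(M, φ, g)`
endowed with the Berger type deformed Sasaki metric `g_BS`.
-/

open scoped BigOperators
open Matrix

namespace BergerSasaki

variable {n : ℕ}

/-- Partial derivative `∂/∂xⁱ` of a real function on the chart `ℝⁿ`. -/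
noncomputable def pd (i : Fin n) (f : (Fin n → ℝ) → ℝ) (x : Fin n → ℝ) : ℝ :=
  fderiv ℝ f x (Pi.single i 1)

/-- The local data of an almost anti-paraHermitian manifold in a global chart `ℝⁿ`:
a Riemannian metric `g` and an almost paracomplex structure `phi` (`phi ∘ phi = id`;
the two eigenbundles for the eigenvalues `±1` have the same rank, i.e. `phi` is
trace free), such that `g(phi X, phi Y) = g(X , Y)`. -/
structure PreData (n : ℕ) where
  g : (Fin n → ℝ) → Matrix (Fin n) (Fin n) ℝ
  phi : (Fin n → ℝ) → Matrix (Fin n) (Fin n) ℝ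
  g_smooth : ∀ i j, ContDiff ℝ (⊤ : ℕ∞) fun x => g x i j
  phi_smooth : ∀ i j, ContDiff ℝ (⊤ : ℕ∞) fun x => phi x i j
  g_symm : ∀ x, (g x).IsSymm
  g_posdef : ∀ x, (g x).PosDef
  phi_sq : ∀ x, phi x * phi x = 1
  phi_trace : ∀ x, (phi x).trace = 0
  compat : ∀ x, (phi x)ᵀ * g x * phi x = g x

/-- Christoffel symbols `Γ^h_{ij}` of the Levi-Civita connection `∇` of `D.g`. -/
noncomputable def Gamma (D : PreData n) (x : Fin n → ℝ) (i j h : Fin n) : ℝ :=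
  (1 / 2) * ∑ l, (D.g x)⁻¹ h l *
    (pd i (fun y => D.g y j l) x + pd j (fun y => D.g y i l) x - pd l (fun y => D.g y i j) x)

/-- Local components `R_{ijl}{}^h` of the Riemann curvature tensor of `∇`. -/
noncomputable def Riem (D : PreData n) (x : Fin n → ℝ) (i j l h : Fin n) : ℝ :=
  pd i (fun y => Gamma D y j l h) x - pd j (fun y => Gamma D y i l h) x
    + ∑ m, Gamma D x j l m * Gamma D x i m h - ∑ m, Gamma D x i l m * Gamma D x j m h

/-- The anti-paraKähler condition `∇ φ = 0`, in local components. -/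
def IsAntiParaKahler (D : PreData n) : Prop :=
  ∀ x i j h,
    pd i (fun y => D.phi y h j) x + ∑ m, Gamma D x i m h * D.phi x m j
      - ∑ m, Gamma D x i j m * D.phi x h m = 0

/-- Points of the induced chart of the tangent bundle `TM`: a pair
`(x, u)` of a base point and a fibre coordinate. -/
abbrev TMpt (n : ℕ) := (Fin n → ℝ) × (Fin n → ℝ)

/-- Index set for the induced coordinates on `TM`: `Sum.inl i ↔ xⁱ`, `Sum.inr i ↔ uⁱ`. -/
abbrev Idx (n : ℕ) := Fin n ⊕ Fin n

/-- Natural components of a point/vector of the tangent bundle chart. -/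
def comp (p : TMpt n) : Idx n → ℝ := Sum.elim p.1 p.2

/-- The natural coordinate basis vectors of the tangent bundle chart. -/
noncomputable def ebase (a : Idx n) : TMpt n :=
  Sum.elim (fun i => (Pi.single i 1, 0)) (fun i => (0, Pi.single i 1)) a

/-- Partial derivatives on the tangent bundle chart. -/
noncomputable def pdT (a : Idx n) (f : TMpt n → ℝ) (p : TMpt n) : ℝ :=
  fderiv ℝ f p (ebase a)

/-- `Γ_{i0}{}^h = u^m Γ^h_{im}` (the index `0` denotes contraction with `u`). -/
noncomputable def Gamma0 (D : PreData n) (p : TMpt n) (i h : Fin n) : ℝ :=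
  ∑ m, Gamma D p.1 i m h * p.2 m

/-- Natural components of the adapted frame: `aframe D (Sum.inl i)` is the horizontal
frame field `E_i = ∂/∂xⁱ - Γ_{i0}{}^h ∂/∂u^h`, and `aframe D (Sum.inr i)` is the
vertical frame field `E_ī = ∂/∂uⁱ`. -/
noncomputable def aframe (D : PreData n) (a : Idx n) (p : TMpt n) : Idx n → ℝ :=
  Sum.elim
    (fun i => Sum.elim (fun h => if h = i then (1 : ℝ) else 0) (fun h => - Gamma0 D p i h))
    (fun i => Sum.elim (fun _ => (0 : ℝ)) (fun h => if h = i then 1 else 0)) a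

/-- The matrix expressing adapted components in terms of natural components
(the inverse of the frame matrix of `aframe`). -/
noncomputable def Bmat (D : PreData n) (p : TMpt n) : Matrix (Idx n) (Idx n) ℝ :=
  fun a b =>
    Sum.elim
      (fun h => Sum.elim (fun i => if h = i then (1 : ℝ) else 0) (fun _ => 0) b)
      (fun h => Sum.elim (fun i => Gamma0 D p i h) (fun i => if h = i then 1 else 0) b) a

/-- The lowered vector `w_i = φ^m_i g_{m0}`, i.e. `g(∂_i, φ u)`. -/
noncomputable def wvec (D : PreData n) (p : TMpt n) (i : Fin n) : ℝ :=
  ∑ m, D.phi p.1 m i * (∑ l, D.g p.1 m l * p.2 l)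

/-- The Berger type deformed Sasaki metric in the adapted frame:
block diagonal with blocks `g_{ij}` and `g_{ij} + δ² g(∂_i, φu) g(∂_j, φu)`. -/
noncomputable def gBSad (D : PreData n) (δ : ℝ) (p : TMpt n) : Matrix (Idx n) (Idx n) ℝ :=
  fun a b =>
    Sum.elim
      (fun i => Sum.elim (fun j => D.g p.1 i j) (fun _ => (0 : ℝ)) b)
      (fun i => Sum.elim (fun _ => (0 : ℝ))
        (fun j => D.g p.1 i j + δ ^ 2 * wvec D p i * wvec D p j) b) a

/-- The Berger type deformed Sasaki metric `g_BS` in the natural coordinates of `TM`. -/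
noncomputable def gBS (D : PreData n) (δ : ℝ) (p : TMpt n) : Matrix (Idx n) (Idx n) ℝ :=
  (Bmat D p)ᵀ * gBSad D δ p * Bmat D p

/-- The Sasaki metric `g_S` in the natural coordinates of `TM` (the case `δ = 0`). -/
noncomputable def gS (D : PreData n) (p : TMpt n) : Matrix (Idx n) (Idx n) ℝ :=
  gBS D 0 p

/-- Christoffel symbols of (the Levi-Civita connection of) a metric `G` on the
tangent bundle chart, in natural coordinates. -/
noncomputable def GammaT (G : TMpt n → Matrix (Idx n) (Idx n) ℝ) (p : TMpt n)
    (a b c : Idx n) : ℝ :=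
  (1 / 2) * ∑ d, (G p)⁻¹ c d *
    (pdT a (fun q => G q b d) p + pdT b (fun q => G q a d) p - pdT d (fun q => G q a b) p)

/-- Covariant derivative (w.r.t. the Levi-Civita connection of `G`) of a vector field `Y`
on `TM` in the direction of a vector field `X`, in natural components. -/
noncomputable def covT (G : TMpt n → Matrix (Idx n) (Idx n) ℝ)
    (X Y : TMpt n → Idx n → ℝ) (p : TMpt n) (c : Idx n) : ℝ :=
  ∑ a, X p a * pdT a (fun q => Y q c) p + ∑ a, ∑ b, GammaT G p a b c * X p a * Y p b

/-- `R^{h·}_{·jki} = R_{ljk}{}^s g^{lh} g_{si}`. -/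
noncomputable def Rup (D : PreData n) (x : Fin n → ℝ) (j k i h : Fin n) : ℝ :=
  ∑ l, ∑ s, Riem D x l j k s * (D.g x)⁻¹ l h * D.g x s i

/-- `R^{h·}_{·j0i} = R_{lj0}{}^s g^{lh} g_{si}`, the index `0` contracted with `u`. -/
noncomputable def Rstar (D : PreData n) (x u : Fin n → ℝ) (j i h : Fin n) : ℝ :=
  ∑ l, ∑ s, (∑ m, Riem D x l j m s * u m) * (D.g x)⁻¹ l h * D.g x s i

/-- Second fundamental form (formula (5)), in natural coordinates, of a map `f` from the
tangent bundle chart (source metric `G`) to the base chart, with target Christoffel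
symbols `Γt`. -/
noncomputable def betaTM2M (G : TMpt n → Matrix (Idx n) (Idx n) ℝ)
    (Γt : (Fin n → ℝ) → Fin n → Fin n → Fin n → ℝ) (f : TMpt n → Fin n → ℝ)
    (p : TMpt n) (a b : Idx n) (h : Fin n) : ℝ :=
  pdT a (fun q => pdT b (fun r => f r h) q) p
    - ∑ c, GammaT G p a b c * pdT c (fun r => f r h) p
    + ∑ i, ∑ j, Γt (f p) i j h * pdT a (fun r => f r i) p * pdT b (fun r => f r j) p

/-- Second fundamental form of a map `f` of the base chart to itself, with source
metric `Gsrc.g` and target Christoffel symbols `Γt`. -/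
noncomputable def betaM2M (Gsrc : PreData n)
    (Γt : (Fin n → ℝ) → Fin n → Fin n → Fin n → ℝ) (f : (Fin n → ℝ) → Fin n → ℝ)
    (x : Fin n → ℝ) (i j h : Fin n) : ℝ :=
  pd i (fun y => pd j (fun z => f z h) y) x
    - ∑ m, Gamma Gsrc x i j m * pd m (fun z => f z h) x
    + ∑ a, ∑ b, Γt (f x) a b h * pd i (fun z => f z a) x * pd j (fun z => f z b) x

/-- Natural components of the map `ξ : M → TM`, `x ↦ (x, ξ(x))`, determined by a
vector field `ξ` on `M`. -/
def ximap (ξ : (Fin n → ℝ) → Fin n → ℝ) (x : Fin n → ℝ) : Idx n → ℝ :=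
  Sum.elim x (ξ x)

/-- A vector field `ξ`, regarded as the map `ξ : (M, g) → (TM, g_BS)`, is an isometric
immersion: the pullback of `g_BS` under `x ↦ (x, ξ(x))` equals `g`. -/
def IsIsometricImmersion (D : PreData n) (δ : ℝ) (ξ : (Fin n → ℝ) → Fin n → ℝ) : Prop :=
  ∀ x i j, (∑ a, ∑ b, pd i (fun y => ximap ξ y a) x * pd j (fun y => ximap ξ y b) x *
      gBS D δ (x, ξ x) a b) = D.g x i j

/-- Covariant derivative `∇_i ξ^h` of a vector field. -/
noncomputable def nabla (D : PreData n) (ξ : (Fin n → ℝ) → Fin n → ℝ)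
    (x : Fin n → ℝ) (i h : Fin n) : ℝ :=
  pd i (fun y => ξ y h) x + ∑ m, Gamma D x i m h * ξ x m

/-- Second covariant derivative `∇_i ∇_j ξ^h` of a vector field. -/
noncomputable def nabla2 (D : PreData n) (ξ : (Fin n → ℝ) → Fin n → ℝ)
    (x : Fin n → ℝ) (i j h : Fin n) : ℝ :=
  pd i (fun y => nabla D ξ y j h) x + ∑ m, Gamma D x i m h * nabla D ξ x j m
    - ∑ m, Gamma D x i j m * nabla D ξ x m h

/-- The coefficient `A^h_{mn} = (δ²/(1+δ²)) φ^k_n φ^h_0 g_{mk}` (index `0` contracted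
with the fibre coordinate `u`). -/
noncomputable def Acoef (D : PreData n) (δ : ℝ) (x u : Fin n → ℝ) (m nn h : Fin n) : ℝ :=
  δ ^ 2 / (1 + δ ^ 2) * ∑ l, D.phi x l nn * (∑ r, D.phi x h r * u r) * D.g x m l

/-- Second fundamental form of the map `ξ : (M, g) → (TM, g_BS)`, `x ↦ (x, ξ(x))`,
in natural components. -/
noncomputable def betaM2TM (D : PreData n) (δ : ℝ) (ξ : (Fin n → ℝ) → Fin n → ℝ)
    (x : Fin n → ℝ) (i j : Fin n) (c : Idx n) : ℝ :=
  pd i (fun y => pd j (fun z => ximap ξ z c) y) x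
    - ∑ m, Gamma D x i j m * pd m (fun z => ximap ξ z c) x
    + ∑ a, ∑ b, GammaT (gBS D δ) (x, ξ x) a b c *
        pd i (fun z => ximap ξ z a) x * pd j (fun z => ximap ξ z b) x

/-- Second fundamental form, in natural coordinates, of a map `f : TM → TM`, the source
carrying a metric `G` and the target a (torsion-free) linear connection with
coefficients `Γt`. -/
noncomputable def betaTM2TM (G : TMpt n → Matrix (Idx n) (Idx n) ℝ)
    (Γt : TMpt n → Idx n → Idx n → Idx n → ℝ) (f : TMpt n → TMpt n)
    (p : TMpt n) (a b c : Idx n) : ℝ :=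
  pdT a (fun q => pdT b (fun r => comp (f r) c) q) p
    - ∑ d, GammaT G p a b d * pdT d (fun r => comp (f r) c) p
    + ∑ d, ∑ e, Γt (f p) d e c *
        pdT a (fun r => comp (f r) d) p * pdT b (fun r => comp (f r) e) p

/-- Horizontal projection (w.r.t. the horizontal distribution of `∇`) of a tangent
vector of `TM`, in natural components. -/
noncomputable def hproj (D : PreData n) (p : TMpt n) (v : Idx n → ℝ) : Idx n → ℝ :=
  fun c => ∑ i, v (Sum.inl i) * aframe D (Sum.inl i) p c

/-- Vertical projection of a tangent vector of `TM`, in natural components. -/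
noncomputable def vproj (D : PreData n) (p : TMpt n) (v : Idx n → ℝ) : Idx n → ℝ :=
  fun c => v c - hproj D p v c

/-- The Schouten-Van Kampen connection associated with the Levi-Civita connection of
`g_BS`:  `∇̃_X Y = V(∇_X (V Y)) + H(∇_X (H Y))`. -/
noncomputable def svk (D : PreData n) (δ : ℝ) (X Y : TMpt n → Idx n → ℝ)
    (p : TMpt n) (c : Idx n) : ℝ :=
  vproj D p (covT (gBS D δ) X (fun q => vproj D q (Y q)) p) c
    + hproj D p (covT (gBS D δ) X (fun q => hproj D q (Y q)) p) c

/-- Lie bracket of vector fields on the tangent bundle chart, in natural components. -/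
noncomputable def lieBracketT (X Y : TMpt n → Idx n → ℝ) (p : TMpt n) (c : Idx n) : ℝ :=
  ∑ a, X p a * pdT a (fun q => Y q c) p - ∑ a, Y p a * pdT a (fun q => X q c) p

/-- Torsion tensor `T(X,Y) = ∇_X Y - ∇_Y X - [X,Y]` of a connection (given as an
operator on vector fields) on the tangent bundle chart. -/
noncomputable def torsionOf
    (Conn : (TMpt n → Idx n → ℝ) → (TMpt n → Idx n → ℝ) → TMpt n → Idx n → ℝ)
    (X Y : TMpt n → Idx n → ℝ) (p : TMpt n) (c : Idx n) : ℝ :=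
  Conn X Y p c - Conn Y X p c - lieBracketT X Y p c

/-- The mean connection `∇ᵐ = ∇̃ - ½ T` of the Schouten-Van Kampen connection `∇̃`. -/
noncomputable def meanConn (D : PreData n) (δ : ℝ) (X Y : TMpt n → Idx n → ℝ)
    (p : TMpt n) (c : Idx n) : ℝ :=
  svk D δ X Y p c - (1 / 2) * torsionOf (svk D δ) X Y p c

/-- The constant coordinate vector field `∂/∂x^a` on the tangent bundle chart. -/
def natE (a : Idx n) : TMpt n → Idx n → ℝ := fun _ c => if c = a then 1 else 0

end BergerSasaki

/-!
Along the section `s : x ↦ (x, ξ x)` the pulled-back metric is `s^* g_BS = g + ⟨∇ξ, V ∇ξ⟩`,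
where `V = g + δ² (φu)♭ ⊗ (φu)♭` is the positive definite vertical block of `g_BS` in the
adapted frame; hence `ξ` is an isometric immersion exactly when `∇ξ = 0`.

If `ξ` is parallel, `ds(∂ᵢ)` is the horizontal lift of `∂ᵢ`, so `g_BS(ds(∂ⱼ), ·)` is `g(∂ⱼ, ·)`
on horizontal and `0` on vertical vectors. Lowering the second fundamental form of `s` with
`g_BS` and expanding the Christoffel symbols of `g_BS` by the Koszul formula along `s`, the
terms in the metric cancel against the Christoffel symbols of `g`, and what is left is
`½ (∂ᵢ∂ⱼs - ∂ⱼ∂ᵢs)`, which vanishes by the symmetry of second derivatives. So a parallel `ξ`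
is even totally geodesic, and in particular minimal.
-/

open scoped ContDiff

section Calculus

variable {E : Type*} [NormedAddCommGroup E] [NormedSpace ℝ E] {x v : E}

theorem fderiv_sum_mul_apply {ι : Type*} [Fintype ι] {f g : ι → E → ℝ}
    (hf : ∀ b, DifferentiableAt ℝ (f b) x) (hg : ∀ b, DifferentiableAt ℝ (g b) x) :
    fderiv ℝ (fun y => ∑ b, f b y * g b y) x v
      = ∑ b, (fderiv ℝ (f b) x v * g b x + f b x * fderiv ℝ (g b) x v) := by
  rw [fderiv_fun_sum (A := fun b y => f b y * g b y) fun b _ => (hf b).mul (hg b)]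
  simp [fderiv_fun_mul (hf _) (hg _), mul_comm, add_comm]

theorem fderiv_sum_mul_apply_of_eq_zero {ι : Type*} [Fintype ι] {f g : ι → E → ℝ}
    (hf : ∀ b, DifferentiableAt ℝ (f b) x) (hg : ∀ b, DifferentiableAt ℝ (g b) x)
    (hf0 : ∀ b, f b x = 0) (hg0 : ∀ b, g b x = 0) :
    fderiv ℝ (fun y => ∑ b, f b y * g b y) x v = 0 := by
  simp [fderiv_sum_mul_apply hf hg, hf0, hg0]

theorem fderiv_dotProduct_mulVec_apply {ι : Type*} [Fintype ι] {G : E → Matrix ι ι ℝ}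
    (hG : ∀ a b, DifferentiableAt ℝ (fun y => G y a b) x) (u w : ι → ℝ) :
    fderiv ℝ (fun y => u ⬝ᵥ (G y *ᵥ w)) x v
      = u ⬝ᵥ (Matrix.of (fun a b => fderiv ℝ (fun y => G y a b) x v) *ᵥ w) := by
  have hrow : ∀ a, DifferentiableAt ℝ (fun y => (G y *ᵥ w) a) x := fun a =>
    DifferentiableAt.fun_sum fun b _ => (hG a b).mul_const _
  simp only [dotProduct]
  rw [fderiv_sum_mul_apply (fun _ => differentiableAt_const _) hrow]
  refine Finset.sum_congr rfl fun a _ => ?_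
  simp only [fderiv_const_apply, Matrix.mulVec, dotProduct]
  rw [fderiv_sum_mul_apply (hG a) (fun _ => differentiableAt_const _)]
  simp

end Calculus

section MatrixForms

variable {ι κ : Type*} [Fintype ι] [Fintype κ]

theorem sum_sum_mul_mul_eq_dotProduct_mulVec {α : Type*} [CommSemiring α] (G : Matrix ι ι α)
    (v w : ι → α) : ∑ a, ∑ b, v a * w b * G a b = v ⬝ᵥ (G *ᵥ w) := by
  simp only [dotProduct, mulVec, Finset.mul_sum]
  exact Finset.sum_congr rfl fun a _ => Finset.sum_congr rfl fun b _ => by ring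

theorem dotProduct_transpose_mul_mul_mulVec {α : Type*} [CommSemiring α] (M : Matrix κ κ α)
    (N : Matrix κ ι α) (v w : ι → α) :
    v ⬝ᵥ ((Nᵀ * M * N) *ᵥ w) = (N *ᵥ v) ⬝ᵥ (M *ᵥ (N *ᵥ w)) := by
  rw [← mulVec_mulVec, ← mulVec_mulVec, dotProduct_mulVec v, vecMul_transpose,
    dotProduct_mulVec (N *ᵥ v)]

theorem sumElim_dotProduct_fromBlocks_zero_mulVec {α : Type*} [CommSemiring α]
    (P : Matrix ι ι α) (Q : Matrix κ κ α) (a c : ι → α) (b d : κ → α) :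
    Sum.elim a b ⬝ᵥ (fromBlocks P 0 0 Q *ᵥ Sum.elim c d) = a ⬝ᵥ (P *ᵥ c) + b ⬝ᵥ (Q *ᵥ d) := by
  simp [fromBlocks_mulVec, dotProduct_block]

theorem Matrix.PosDef.fromBlocks_zero {P : Matrix ι ι ℝ} {Q : Matrix κ κ ℝ} (hP : P.PosDef)
    (hQ : Q.PosDef) : (fromBlocks P 0 0 Q).PosDef := by
  refine PosDef.of_dotProduct_mulVec_pos (hP.1.fromBlocks (by simp) hQ.1) fun v hv => ?_
  rw [star_trivial, ← Sum.elim_comp_inl_inr v, sumElim_dotProduct_fromBlocks_zero_mulVec]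
  have hP' := hP.posSemidef.dotProduct_mulVec_nonneg (v ∘ Sum.inl)
  have hQ' := hQ.posSemidef.dotProduct_mulVec_nonneg (v ∘ Sum.inr)
  simp only [star_trivial] at hP' hQ'
  by_cases hl : v ∘ Sum.inl = 0
  · have hr : v ∘ Sum.inr ≠ 0 := fun hr => hv (by rw [← Sum.elim_comp_inl_inr v, hl, hr]; simp)
    simpa using add_lt_add_of_le_of_lt hP' (by simpa using hQ.dotProduct_mulVec_pos hr)
  · simpa using add_lt_add_of_lt_of_le (by simpa using hP.dotProduct_mulVec_pos hl) hQ'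

theorem sum_mul_half_mul_sum_inv_mul [DecidableEq ι] (M : Matrix ι ι ℝ)
    (hM : IsUnit M.det) (K : ι → ℝ) (e : ι) :
    ∑ c, M e c * ((1 / 2) * ∑ d, M⁻¹ c d * K d) = (1 / 2) * K e := by
  have hK : M *ᵥ (M⁻¹ *ᵥ K) = K := by
    rw [Matrix.mulVec_mulVec, Matrix.mul_nonsing_inv _ hM, Matrix.one_mulVec]
  rw [← congrFun hK e]
  simp only [Matrix.mulVec, dotProduct, Finset.mul_sum]
  exact Finset.sum_congr rfl fun c _ => Finset.sum_congr rfl fun d _ => by ring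

end MatrixForms

section SmoothInverse

variable {E : Type*} [NormedAddCommGroup E] [NormedSpace ℝ E] {ι : Type*} [Fintype ι]
  [DecidableEq ι] {k : WithTop ℕ∞} {M : E → Matrix ι ι ℝ}

theorem contDiff_det_of_apply (hM : ∀ i j, ContDiff ℝ k fun x => M x i j) :
    ContDiff ℝ k fun x => (M x).det := by
  simp only [Matrix.det_apply']
  exact ContDiff.sum fun σ _ => contDiff_const.mul (contDiff_prod fun i _ => hM (σ i) i)

theorem contDiff_inv_apply_of_apply (hM : ∀ i j, ContDiff ℝ k fun x => M x i j)
    (hdet : ∀ x, (M x).det ≠ 0) (i j : ι) : ContDiff ℝ k fun x => (M x)⁻¹ i j := by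
  have hadj : ContDiff ℝ k fun x => (M x).adjugate i j := by
    simp only [Matrix.adjugate_apply]
    refine contDiff_det_of_apply fun a b => ?_
    by_cases h : a = j <;> simp [Matrix.updateRow_apply, h, hM a b, contDiff_const]
  simp only [Matrix.inv_def, Ring.inverse_eq_inv, Matrix.smul_apply, smul_eq_mul]
  exact ((contDiff_det_of_apply hM).inv hdet).mul hadj

end SmoothInverse

namespace BergerSasaki

theorem pd_pd_comm {n : ℕ} {f : (Fin n → ℝ) → ℝ} (hf : ContDiff ℝ 2 f) (i j : Fin n)
    (y : Fin n → ℝ) :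
    pd i (fun z => pd j f z) y = pd j (fun z => pd i f z) y := by
  have hsnd : ∀ k l, pd k (fun z => pd l f z) y
      = fderiv ℝ (fderiv ℝ f) y (Pi.single k 1) (Pi.single l 1) := fun k l => by
    have hdf : DifferentiableAt ℝ (fderiv ℝ f) y :=
      ((hf.fderiv_right (m := 1) (by norm_num)).differentiable (by norm_num)) y
    simp only [pd]
    rw [fderiv_clm_apply hdf (differentiableAt_const _)]
    simp
  rw [hsnd, hsnd, (hf.contDiffAt.isSymmSndFDerivAt (by simp)).eq]

variable {n : ℕ} (D : PreData n) (δ : ℝ)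

theorem contDiff_pd {f : (Fin n → ℝ) → ℝ} (hf : ContDiff ℝ ∞ f) (i : Fin n) :
    ContDiff ℝ ∞ fun x => pd i f x :=
  (hf.fderiv_right (m := ∞) (by simp)).clm_apply contDiff_const

theorem contDiff_Gamma (i j h : Fin n) : ContDiff ℝ ∞ fun x => Gamma D x i j h := by
  have hinv := contDiff_inv_apply_of_apply D.g_smooth fun x => (D.g_posdef x).det_pos.ne'
  unfold Gamma
  exact contDiff_const.mul (ContDiff.sum fun l _ => (hinv h l).mul
    (((contDiff_pd (D.g_smooth j l) i).add (contDiff_pd (D.g_smooth i l) j)).sub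
      (contDiff_pd (D.g_smooth i j) l)))

theorem contDiff_Gamma0 (i h : Fin n) : ContDiff ℝ ∞ fun p : TMpt n => Gamma0 D p i h :=
  ContDiff.sum fun m _ => ((contDiff_Gamma D i m h).comp contDiff_fst).mul
    ((contDiff_apply ℝ ℝ m).comp contDiff_snd)

theorem contDiff_wvec (i : Fin n) : ContDiff ℝ ∞ fun p : TMpt n => wvec D p i :=
  ContDiff.sum fun m _ => ((D.phi_smooth m i).comp contDiff_fst).mul
    (ContDiff.sum fun l _ => ((D.g_smooth m l).comp contDiff_fst).mul
      ((contDiff_apply ℝ ℝ l).comp contDiff_snd))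

noncomputable def vertMetric (p : TMpt n) : Matrix (Fin n) (Fin n) ℝ :=
  D.g p.1 + δ ^ 2 • vecMulVec (wvec D p) (wvec D p)

theorem vertMetric_posDef (p : TMpt n) : (vertMetric D δ p).PosDef :=
  (D.g_posdef p.1).add_posSemidef <| by
    simpa using (posSemidef_vecMulVec_self_star (wvec D p)).smul (sq_nonneg δ)

theorem contDiff_vertMetric_apply (i j : Fin n) :
    ContDiff ℝ ∞ fun p : TMpt n => vertMetric D δ p i j := by
  simp only [vertMetric, Matrix.add_apply, Matrix.smul_apply, vecMulVec_apply, smul_eq_mul]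
  exact ((D.g_smooth i j).comp contDiff_fst).add
    (contDiff_const.mul ((contDiff_wvec D i).mul (contDiff_wvec D j)))

theorem gBSad_eq_fromBlocks (p : TMpt n) :
    gBSad D δ p = fromBlocks (D.g p.1) 0 0 (vertMetric D δ p) := by
  ext (i | i) (j | j) <;> simp [gBSad, vertMetric, vecMulVec_apply, mul_assoc]

noncomputable def gamma0Mat (p : TMpt n) : Matrix (Fin n) (Fin n) ℝ :=
  of fun h i => Gamma0 D p i h

theorem Bmat_eq_fromBlocks (p : TMpt n) : Bmat D p = fromBlocks 1 0 (gamma0Mat D p) 1 := by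
  ext (i | i) (j | j) <;> simp [Bmat, gamma0Mat, one_apply, eq_comm]

theorem Bmat_mulVec (p : TMpt n) (v : Idx n → ℝ) :
    Bmat D p *ᵥ v = Sum.elim (v ∘ Sum.inl) (gamma0Mat D p *ᵥ (v ∘ Sum.inl) + v ∘ Sum.inr) := by
  simp [Bmat_eq_fromBlocks, fromBlocks_mulVec]

theorem Bmat_mulVec_injective (p : TMpt n) : Function.Injective (Bmat D p).mulVec := by
  intro v w hvw
  rw [Bmat_mulVec, Bmat_mulVec] at hvw
  have hl : v ∘ Sum.inl = w ∘ Sum.inl := by simpa using congrArg (· ∘ Sum.inl) hvw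
  have hr : v ∘ Sum.inr = w ∘ Sum.inr := by simpa [hl] using congrArg (· ∘ Sum.inr) hvw
  rw [← Sum.elim_comp_inl_inr v, ← Sum.elim_comp_inl_inr w, hl, hr]

theorem gBS_posDef (p : TMpt n) : (gBS D δ p).PosDef := by
  have hA : (gBSad D δ p).PosDef := by
    rw [gBSad_eq_fromBlocks]
    exact (D.g_posdef p.1).fromBlocks_zero (vertMetric_posDef D δ p)
  simpa [gBS, conjTranspose_eq_transpose_of_trivial] using
    hA.conjTranspose_mul_mul_same (Bmat_mulVec_injective D p)

theorem gBS_symm_apply (p : TMpt n) (a b : Idx n) : gBS D δ p a b = gBS D δ p b a := by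
  simpa using (congrFun (congrFun (gBS_posDef D δ p).1 a) b).symm

theorem contDiff_gBS_apply (a b : Idx n) : ContDiff ℝ ∞ fun p : TMpt n => gBS D δ p a b := by
  have hB : ∀ c d, ContDiff ℝ ∞ fun p : TMpt n => Bmat D p c d := by
    rintro (i | i) (j | j) <;> simp [Bmat, contDiff_const, contDiff_Gamma0]
  have hg : ∀ i j, ContDiff ℝ ∞ fun p : TMpt n => D.g p.1 i j := fun i j =>
    (D.g_smooth i j).comp contDiff_fst
  have hA : ∀ c d, ContDiff ℝ ∞ fun p : TMpt n => gBSad D δ p c d := by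
    rintro (i | i) (j | j) <;>
      simp [gBSad_eq_fromBlocks, contDiff_const, hg, contDiff_vertMetric_apply]
  simp only [gBS, mul_apply, transpose_apply]
  exact ContDiff.sum fun d _ => (ContDiff.sum fun c _ => (hB c a).mul (hA c d)).mul (hB d b)

variable (ξ : (Fin n → ℝ) → Fin n → ℝ)

def IsParallel : Prop := ∀ x i h, nabla D ξ x i h = 0

noncomputable def dximap (x : Fin n → ℝ) (i : Fin n) : Idx n → ℝ :=
  fun a => pd i (fun y => ximap ξ y a) x

theorem pd_apply_self (x : Fin n → ℝ) (i a : Fin n) :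
    pd i (fun y => y a) x = (Pi.single i 1 : Fin n → ℝ) a := by
  simp [pd, fderiv_apply]

theorem dximap_comp_inl (x : Fin n → ℝ) (i : Fin n) : dximap ξ x i ∘ Sum.inl = Pi.single i 1 :=
  funext fun a => pd_apply_self x i a

/-- Vertical adapted components, at an arbitrary point `q` of `TM`, of the constant vector
`dximap ξ x i`. -/
noncomputable def vertComp (x : Fin n → ℝ) (i : Fin n) (q : TMpt n) : Fin n → ℝ :=
  fun h => Gamma0 D q i h - Gamma0 D (x, ξ x) i h + nabla D ξ x i h

theorem Bmat_mulVec_dximap (x : Fin n → ℝ) (i : Fin n) (q : TMpt n) :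
    Bmat D q *ᵥ dximap ξ x i = Sum.elim (Pi.single i 1) (vertComp D ξ x i q) := by
  rw [Bmat_mulVec, dximap_comp_inl]
  congr 1
  funext h
  simp [gamma0Mat, vertComp, nabla, Gamma0, dximap, ximap]

theorem dotProduct_dximap_gBS_mulVec (x : Fin n → ℝ) (i j : Fin n) (q : TMpt n) :
    dximap ξ x i ⬝ᵥ (gBS D δ q *ᵥ dximap ξ x j)
      = D.g q.1 i j + vertComp D ξ x i q ⬝ᵥ (vertMetric D δ q *ᵥ vertComp D ξ x j q) := by
  rw [gBS, dotProduct_transpose_mul_mul_mulVec, Bmat_mulVec_dximap, Bmat_mulVec_dximap,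
    gBSad_eq_fromBlocks, sumElim_dotProduct_fromBlocks_zero_mulVec]
  simp

theorem vertComp_self (x : Fin n → ℝ) (i : Fin n) :
    vertComp D ξ x i (x, ξ x) = fun h => nabla D ξ x i h := by
  funext h
  simp [vertComp]

theorem isIsometricImmersion_iff_isParallel : IsIsometricImmersion D δ ξ ↔ IsParallel D ξ := by
  have hpull : ∀ x i j,
      (∑ a, ∑ b, pd i (fun y => ximap ξ y a) x * pd j (fun y => ximap ξ y b) x *
          gBS D δ (x, ξ x) a b)
        = D.g x i j + (fun h => nabla D ξ x i h) ⬝ᵥ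
            (vertMetric D δ (x, ξ x) *ᵥ fun h => nabla D ξ x j h) := fun x i j => by
    rw [← vertComp_self, ← vertComp_self]
    exact (sum_sum_mul_mul_eq_dotProduct_mulVec _ _ _).trans
      (dotProduct_dximap_gBS_mulVec D δ ξ x i j (x, ξ x))
  simp only [IsIsometricImmersion, hpull, add_eq_left]
  constructor
  · intro hiso x i h
    by_contra hne
    have hv : (fun h => nabla D ξ x i h) ≠ 0 := fun hv => hne (congrFun hv h)
    simpa [hiso x i i] using (vertMetric_posDef D δ (x, ξ x)).dotProduct_mulVec_pos hv
  · intro hpar x i j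
    have hzero : (fun h => nabla D ξ x j h) = 0 := funext (hpar x j)
    rw [hzero, mulVec_zero, dotProduct_zero]

theorem gBS_mulVec_dximap_of_isParallel (hpar : IsParallel D ξ) (y : Fin n → ℝ) (j : Fin n) :
    gBS D δ (y, ξ y) *ᵥ dximap ξ y j = Sum.elim (D.g y j) 0 := by
  -- `dximap ξ y j` is the horizontal lift of `∂ⱼ`
  have hB : Bmat D (y, ξ y) *ᵥ dximap ξ y j = Sum.elim (Pi.single j 1) 0 := by
    rw [Bmat_mulVec_dximap, vertComp_self]
    exact congrArg _ (funext (hpar y j))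
  rw [gBS, ← mulVec_mulVec, ← mulVec_mulVec, hB, gBSad_eq_fromBlocks, Bmat_eq_fromBlocks,
    fromBlocks_transpose, fromBlocks_mulVec, fromBlocks_mulVec]
  ext (h | h) <;> simp [-Sum.elim_single_zero, (D.g_symm y).apply, col_apply', ← Pi.zero_def]

theorem sum_comp_smul_ebase (v : TMpt n) : ∑ a, comp v a • ebase a = v := by
  rw [Fintype.sum_sum_type]
  ext h <;> simp [comp, ebase, Prod.fst_sum, Prod.snd_sum, Pi.single_apply]

theorem pd_comp_section {F : TMpt n → ℝ} {x : Fin n → ℝ} (hξ : DifferentiableAt ℝ ξ x)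
    (hF : DifferentiableAt ℝ F (x, ξ x)) (i : Fin n) :
    pd i (fun y => F (y, ξ y)) x = ∑ a, dximap ξ x i a * pdT a F (x, ξ x) := by
  have hdir : fderiv ℝ (fun y => (y, ξ y)) x (Pi.single i 1)
      = ((Pi.single i 1 : Fin n → ℝ), fun h => pd i (fun y => ξ y h) x) := by
    rw [DifferentiableAt.fderiv_prodMk differentiableAt_fun_id hξ,
      fderiv_pi fun h => differentiableAt_pi.1 hξ h]
    simp [pd]
  have hcomp : comp (((Pi.single i 1 : Fin n → ℝ), fun h => pd i (fun y => ξ y h) x))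
      = dximap ξ x i := by
    funext a
    rcases a with a | a
    · exact (pd_apply_self x i a).symm
    · rfl
  simp only [pd]
  rw [fderiv_fun_comp x hF (differentiableAt_fun_id.prodMk hξ), ContinuousLinearMap.comp_apply,
    hdir, ← sum_comp_smul_ebase ((Pi.single i 1 : Fin n → ℝ), fun h => pd i (fun y => ξ y h) x),
    map_sum, hcomp]
  simp only [map_smul, smul_eq_mul]
  rfl

theorem sum_mul_GammaT {G : TMpt n → Matrix (Idx n) (Idx n) ℝ} {p : TMpt n}
    (hG : IsUnit (G p).det) (a b e : Idx n) :
    ∑ c, G p e c * GammaT G p a b c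
      = (1 / 2) * (pdT a (fun q => G q b e) p + pdT b (fun q => G q a e) p
          - pdT e (fun q => G q a b) p) :=
  sum_mul_half_mul_sum_inv_mul (G p) hG _ e

theorem sum_Gamma_mul_g (x : Fin n → ℝ) (i j h : Fin n) :
    ∑ m, Gamma D x i j m * D.g x m h
      = (1 / 2) * (pd i (fun y => D.g y j h) x + pd j (fun y => D.g y i h) x
          - pd h (fun y => D.g y i j) x) := by
  refine Eq.trans ?_ (sum_mul_half_mul_sum_inv_mul (D.g x) (D.g_posdef x).det_pos.ne'.isUnit
    (fun l => pd i (fun y => D.g y j l) x + pd j (fun y => D.g y i l) x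
      - pd l (fun y => D.g y i j) x) h)
  refine Finset.sum_congr rfl fun m _ => ?_
  rw [Gamma, (D.g_symm x).apply m h, mul_comm]

theorem pdT_comp_fst {f : (Fin n → ℝ) → ℝ} {p : TMpt n} (hf : DifferentiableAt ℝ f p.1)
    (e : Idx n) : pdT e (fun q => f q.1) p = Sum.elim (fun h => pd h f p.1) 0 e := by
  rw [pdT, fderiv_fun_comp p hf differentiableAt_fst, fderiv_fst]
  rcases e with h | h <;> simp [ebase, pd]

theorem pdT_dotProduct_dximap_gBS_mulVec_of_isParallel (hpar : IsParallel D ξ)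
    (x : Fin n → ℝ) (i j : Fin n) (e : Idx n) :
    pdT e (fun q => dximap ξ x i ⬝ᵥ (gBS D δ q *ᵥ dximap ξ x j)) (x, ξ x)
      = Sum.elim (fun h => pd h (fun y => D.g y i j) x) 0 e := by
  have hdiff : ∀ {f : TMpt n → ℝ}, ContDiff ℝ ∞ f → DifferentiableAt ℝ f (x, ξ x) :=
    fun hf => hf.differentiable (by simp) _
  have hr : ∀ i h, ContDiff ℝ ∞ fun q => vertComp D ξ x i q h := fun i h =>
    ((contDiff_Gamma0 D i h).sub contDiff_const).add contDiff_const
  have hfun : (fun q => dximap ξ x i ⬝ᵥ (gBS D δ q *ᵥ dximap ξ x j))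
      = fun q => D.g q.1 i j
          + ∑ h, vertComp D ξ x i q h * (vertMetric D δ q *ᵥ vertComp D ξ x j q) h :=
    funext fun q => dotProduct_dximap_gBS_mulVec D δ ξ x i j q
  have hs : ∀ h, ContDiff ℝ ∞ fun q => (vertMetric D δ q *ᵥ vertComp D ξ x j q) h := fun h => by
    simp only [mulVec, dotProduct]
    exact ContDiff.sum fun l _ => (contDiff_vertMetric_apply D δ h l).mul (hr j l)
  have hzero : ∀ i, vertComp D ξ x i (x, ξ x) = 0 := fun i => by
    rw [vertComp_self]
    exact funext (hpar x i)
  have hg : ContDiff ℝ ∞ fun q : TMpt n => D.g q.1 i j := (D.g_smooth i j).comp contDiff_fst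
  rw [pdT, hfun, fderiv_fun_add (hdiff hg) (hdiff (ContDiff.sum fun h _ => (hr i h).mul (hs h))),
    _root_.add_apply, fderiv_sum_mul_apply_of_eq_zero (fun h => hdiff (hr i h))
      (fun h => hdiff (hs h)) (fun h => congrFun (hzero i) h) (fun h => by simp [hzero]),
    add_zero]
  exact pdT_comp_fst (p := (x, ξ x)) ((D.g_smooth i j).differentiable (by simp) x) e

theorem sum_mul_sum_sum_GammaT_dximap {G : TMpt n → Matrix (Idx n) (Idx n) ℝ}
    (hG : ∀ a b, Differentiable ℝ fun q => G q a b) {x : Fin n → ℝ}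
    (hdet : IsUnit (G (x, ξ x)).det) (hξ : DifferentiableAt ℝ ξ x) (i j : Fin n) (e : Idx n) :
    ∑ c, G (x, ξ x) e c * ∑ a, ∑ b, GammaT G (x, ξ x) a b c * dximap ξ x i a * dximap ξ x j b
      = (1 / 2) * (∑ b, dximap ξ x j b * pd i (fun y => G (y, ξ y) b e) x
          + ∑ a, dximap ξ x i a * pd j (fun y => G (y, ξ y) a e) x
          - pdT e (fun q => dximap ξ x i ⬝ᵥ (G q *ᵥ dximap ξ x j)) (x, ξ x)) := by
  simp only [pd_comp_section ξ hξ (hG _ _ _), pdT,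
    fderiv_dotProduct_mulVec_apply (fun a b => hG a b _)]
  calc ∑ c, G (x, ξ x) e c * ∑ a, ∑ b, GammaT G (x, ξ x) a b c * dximap ξ x i a * dximap ξ x j b
      = ∑ a, ∑ b, dximap ξ x i a * dximap ξ x j b *
          ∑ c, G (x, ξ x) e c * GammaT G (x, ξ x) a b c := by
        simp only [Finset.mul_sum]
        rw [Finset.sum_comm]
        refine Finset.sum_congr rfl fun a _ => ?_
        rw [Finset.sum_comm]
        exact Finset.sum_congr rfl fun b _ => Finset.sum_congr rfl fun c _ => by ring
    _ = _ := by
        simp only [sum_mul_GammaT hdet, pdT, dotProduct, mulVec, of_apply, Finset.mul_sum,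
          mul_add, mul_sub, Finset.sum_add_distrib, Finset.sum_sub_distrib]
        congr 1
        · congr 1
          · rw [Finset.sum_comm]
            exact Finset.sum_congr rfl fun _ _ => Finset.sum_congr rfl fun _ _ => by ring
          · exact Finset.sum_congr rfl fun _ _ => Finset.sum_congr rfl fun _ _ => by ring
        · exact Finset.sum_congr rfl fun _ _ => Finset.sum_congr rfl fun _ _ => by ring

theorem contDiff_ximap_apply (hξ : ∀ h, ContDiff ℝ ∞ fun x => ξ x h) (a : Idx n) :
    ContDiff ℝ ∞ fun y => ximap ξ y a := by
  rcases a with h | h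
  · exact contDiff_apply ℝ ℝ h
  · exact hξ h

theorem contDiff_gBS_comp_section (hξ : ∀ h, ContDiff ℝ ∞ fun x => ξ x h) (a b : Idx n) :
    ContDiff ℝ ∞ fun y => gBS D δ (y, ξ y) a b :=
  (contDiff_gBS_apply D δ a b).comp (contDiff_id.prodMk (contDiff_pi.2 hξ))

theorem sum_dximap_mul_pd_gBS_of_isParallel (hξ : ∀ h, ContDiff ℝ ∞ fun x => ξ x h)
    (hpar : IsParallel D ξ) (x : Fin n → ℝ) (i j : Fin n) (e : Idx n) :
    ∑ b, dximap ξ x j b * pd i (fun y => gBS D δ (y, ξ y) b e) x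
      = Sum.elim (fun h => pd i (fun y => D.g y j h) x) 0 e
        - ∑ b, pd i (fun y => dximap ξ y j b) x * gBS D δ (x, ξ x) b e := by
  have hdual : ∀ y, ∑ b, dximap ξ y j b * gBS D δ (y, ξ y) b e = Sum.elim (D.g y j) 0 e :=
    fun y => by
      rw [← gBS_mulVec_dximap_of_isParallel D δ ξ hpar y j]
      simp only [mulVec, dotProduct]
      exact Finset.sum_congr rfl fun b _ => by rw [gBS_symm_apply, mul_comm]
  have hprod := fderiv_sum_mul_apply (x := x) (v := Pi.single i 1)
    (f := fun b y => dximap ξ y j b) (g := fun b y => gBS D δ (y, ξ y) b e)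
    (fun b => (contDiff_pd (contDiff_ximap_apply ξ hξ b) j).differentiable (by simp) x)
    (fun b => (contDiff_gBS_comp_section D δ ξ hξ b e).differentiable (by simp) x)
  simp only [hdual, Finset.sum_add_distrib] at hprod
  rw [eq_sub_iff_add_eq, add_comm]
  refine hprod.symm.trans ?_
  rcases e with h | h
  · rfl
  · simp

theorem gBS_mulVec_betaM2TM_apply (x : Fin n → ℝ) (i j : Fin n) (e : Idx n) :
    (gBS D δ (x, ξ x) *ᵥ fun c => betaM2TM D δ ξ x i j c) e
      = ∑ c, pd i (fun y => dximap ξ y j c) x * gBS D δ (x, ξ x) c e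
        - ∑ m, Gamma D x i j m * (gBS D δ (x, ξ x) *ᵥ dximap ξ x m) e
        + ∑ c, gBS D δ (x, ξ x) e c * ∑ a, ∑ b,
            GammaT (gBS D δ) (x, ξ x) a b c * dximap ξ x i a * dximap ξ x j b := by
  simp only [mulVec, dotProduct, betaM2TM, dximap, Finset.mul_sum, mul_add, mul_sub,
    Finset.sum_add_distrib, Finset.sum_sub_distrib]
  congr 1
  congr 1
  · exact Finset.sum_congr rfl fun c _ => by rw [gBS_symm_apply, mul_comm]
  · rw [Finset.sum_comm]
    exact Finset.sum_congr rfl fun _ _ => Finset.sum_congr rfl fun _ _ => by ring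

theorem gBS_mulVec_betaM2TM_of_isParallel (hξ : ∀ h, ContDiff ℝ ∞ fun x => ξ x h)
    (hpar : IsParallel D ξ) (x : Fin n → ℝ) (i j : Fin n) :
    gBS D δ (x, ξ x) *ᵥ (fun c => betaM2TM D δ ξ x i j c) = 0 := by
  funext e
  have hhess : ∀ c, pd j (fun y => dximap ξ y i c) x = pd i (fun y => dximap ξ y j c) x :=
    fun c => pd_pd_comm ((contDiff_ximap_apply ξ hξ c).of_le (WithTop.coe_le_coe.2 le_top)) j i x
  have hkoszul := sum_mul_sum_sum_GammaT_dximap ξ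
    (fun a b => (contDiff_gBS_apply D δ a b).differentiable (by simp))
    (gBS_posDef D δ (x, ξ x)).det_pos.ne'.isUnit
    ((contDiff_pi.2 hξ).differentiable (by simp) x) i j e
  rw [sum_dximap_mul_pd_gBS_of_isParallel D δ ξ hξ hpar x i j,
    sum_dximap_mul_pd_gBS_of_isParallel D δ ξ hξ hpar x j i,
    pdT_dotProduct_dximap_gBS_mulVec_of_isParallel D δ ξ hpar] at hkoszul
  rw [gBS_mulVec_betaM2TM_apply, hkoszul]
  simp only [hhess, gBS_mulVec_dximap_of_isParallel D δ ξ hpar]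
  rcases e with h | h <;>
    simp only [Sum.elim_inl, Sum.elim_inr, Pi.zero_apply, mul_zero, Finset.sum_const_zero]
  · linarith [sum_Gamma_mul_g D x i j h]
  · ring

theorem betaM2TM_eq_zero_of_isParallel (hξ : ∀ h, ContDiff ℝ ∞ fun x => ξ x h)
    (hpar : IsParallel D ξ) (x : Fin n → ℝ) (i j : Fin n) (c : Idx n) :
    betaM2TM D δ ξ x i j c = 0 := by
  have h := gBS_mulVec_betaM2TM_of_isParallel D δ ξ hξ hpar x i j
  rw [← mulVec_zero (gBS D δ (x, ξ x))] at h
  exact congrFun (mulVec_injective_iff_isUnit.2 (gBS_posDef D δ (x, ξ x)).isUnit h) c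

theorem xi_parallel_iff_minimal_isometricImmersion_general (k : ℕ) (D : PreData (2 * k))
    (δ : ℝ) (ξ : (Fin (2 * k) → ℝ) → Fin (2 * k) → ℝ)
    (hξ : ∀ h, ContDiff ℝ (⊤ : ℕ∞) fun x => ξ x h) :
    (∀ (x : Fin (2 * k) → ℝ) (i h : Fin (2 * k)), nabla D ξ x i h = 0)
      ↔ (IsIsometricImmersion D δ ξ ∧
         ∀ (x : Fin (2 * k) → ℝ) (c : Idx (2 * k)),
           (∑ i, ∑ j, (D.g x)⁻¹ i j * betaM2TM D δ ξ x i j c) = 0) := by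
  rw [isIsometricImmersion_iff_isParallel]
  refine ⟨fun hpar => ⟨hpar, fun x c => ?_⟩, And.left⟩
  simp [betaM2TM_eq_zero_of_isParallel D δ ξ hξ hpar]

/-- A vector field `ξ` on `M` is parallel (`∇ ξ = 0`) if and only if
the map `ξ : (M, g) → (TM, g_BS)` is a minimal isometric immersion (an isometric
immersion whose mean curvature — the trace of its second fundamental form — vanishes). -/
theorem xi_parallel_iff_minimal_isometricImmersion (k : ℕ) (D : PreData (2 * k))
    (hD : IsAntiParaKahler D) (δ : ℝ) (ξ : (Fin (2 * k) → ℝ) → Fin (2 * k) → ℝ)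
    (hξ : ∀ h, ContDiff ℝ (⊤ : ℕ∞) fun x => ξ x h) :
    (∀ (x : Fin (2 * k) → ℝ) (i h : Fin (2 * k)), nabla D ξ x i h = 0)
      ↔ (IsIsometricImmersion D δ ξ ∧
         ∀ (x : Fin (2 * k) → ℝ) (c : Idx (2 * k)),
           (∑ i, ∑ j, (D.g x)⁻¹ i j * betaM2TM D δ ξ x i j c) = 0) :=
  xi_parallel_iff_minimal_isometricImmersion_general k D δ ξ hξ

end BergerSasaki
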